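/- Fix k ∈ ℕ and n ≥ 1. Identify each partition of the barred copy of [(k+1)n] with a partition of [(k+1)n] by relabeling x̄ ↦ x. Then for every π ∈ NC^{(k)}(n), the Kreweras complement Kr(π) again belongs to NC^{(k)}(n); moreover the map π ↦ Kr(π) is a bijection of NC^{(k)}(n) onto itself, and it reverses the reverse-refinement order: if π, ρ ∈ NC^{(k)}(n) with π ≼ ρ, then Kr(ρ) ≼ Kr(π). -/

import Mathlib

open scoped BigOperators
attribute [local instance] Classical.propDecidable

/-- A (set) partition of a type `X`: nonempty blocks, every point in a unique block. -/
def IsPartition {X : Type*} (P : Finset (Finset X)) : Prop :=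
  (∀ B ∈ P, B.Nonempty) ∧ ∀ x : X, ∃! B, B ∈ P ∧ x ∈ B

/-- Non-crossing collection of blocks in a linear order. -/
def IsNonCrossing {X : Type*} [LinearOrder X] (P : Finset (Finset X)) : Prop :=
  ∀ a b c d : X, a < b → b < c → c < d →
    (∃ B ∈ P, a ∈ B ∧ c ∈ B) → (∃ B ∈ P, b ∈ B ∧ d ∈ B) →
    ∃ B ∈ P, a ∈ B ∧ b ∈ B

/-- The finset `NC(n)` of non-crossing partitions of `[n]` (modelled on `Fin n`). -/
noncomputable def ncFinset (n : ℕ) : Finset (Finset (Finset (Fin n))) :=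
  Finset.univ.filter fun P => IsPartition P ∧ IsNonCrossing P

/-- The subtuple `(a_1,…,a_n)|V` of the entries indexed by `V`, in increasing order. -/
noncomputable def restrictTuple {A : Type*} {n : ℕ} (a : Fin n → A) (V : Finset (Fin n)) :
    Fin V.card → A :=
  fun i => a (V.orderIsoOfFin rfl i).1
/-- The interleaved set `[m] ∪ [m̄]` with order `1 < 1̄ < 2 < 2̄ < ⋯ < m < m̄`
(unbarred = `false`, barred = `true`). -/
abbrev Interl (m : ℕ) := Lex (Fin m × Bool)

/-- The copy of a block of `[m]` inside the unbarred part of `[m] ∪ [m̄]`. -/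
def unbar {m : ℕ} (B : Finset (Fin m)) : Finset (Interl m) :=
  B.image fun i => toLex (i, false)

/-- The copy of a block of `[m]` inside the barred part of `[m] ∪ [m̄]`. -/
def barred {m : ℕ} (B : Finset (Fin m)) : Finset (Interl m) :=
  B.image fun i => toLex (i, true)

/-- The union `p ∪ q` of a partition `p` of `[m]` and a partition `q` of the barred copy
`[m̄]` (blocks of `q` being recorded by their unbarred labels), as a collection of blocks
of the interleaved set `[m] ∪ [m̄]`. -/
noncomputable def unionPart {m : ℕ} (p q : Finset (Finset (Fin m))) :
    Finset (Finset (Interl m)) :=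
  p.image unbar ∪ q.image barred

/-- `P` refines `Q` (reverse refinement order: `P ≼ Q`). -/
def Refines {X : Type*} (P Q : Finset (Finset X)) : Prop :=
  ∀ B ∈ P, ∃ C ∈ Q, B ⊆ C

/-- `q` is the Kreweras complement of `p`: `q` is a partition of `[m̄]` (identified with
a partition of `[m]` by relabeling) such that `p ∪ q` is non-crossing on the interleaved
set, and `q` is the greatest such partition for the reverse refinement order. -/
def IsKr {m : ℕ} (p q : Finset (Finset (Fin m))) : Prop :=
  IsPartition q ∧ IsNonCrossing (unionPart p q) ∧
    ∀ q' : Finset (Finset (Fin m)), IsPartition q' → IsNonCrossing (unionPart p q') →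
      Refines q' q

/-- The Kreweras complement `Kr(p)`, as a function (defined via choice: for a
non-crossing partition `p` the complement exists and is unique). -/
noncomputable def kr {m : ℕ} (p : Finset (Finset (Fin m))) : Finset (Finset (Fin m)) :=
  if h : ∃ q, IsKr p q then h.choose else ∅
/-- The reduction map `Red : [(k+1)n] → [n]`, sending `x` to its residue mod `n`
(with `Fin` modelling, `x ↦ x % n`). -/
def red {k n : ℕ} (x : Fin ((k + 1) * n)) : Fin n :=
  ⟨x.1 % n, Nat.mod_lt _ (Nat.pos_of_ne_zero (by rintro rfl; exact absurd x.2 (by simp)))⟩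

/-- The image of a collection of blocks under the reduction map. -/
noncomputable def redPart {k n : ℕ} (P : Finset (Finset (Fin ((k + 1) * n)))) :
    Finset (Finset (Fin n)) :=
  P.image fun B => B.image red

/-- The reduction map on the interleaved set, preserving bars. -/
def redInterl {k n : ℕ} (x : Interl ((k + 1) * n)) : Interl n :=
  toLex (red (ofLex x).1, (ofLex x).2)

/-- `NC^{(k)}(n)`: the non-crossing partitions of `[(k+1)n]` satisfying the mod `n`
reduction property, i.e. `Red(π)` is a non-crossing partition of `[n]` and
`Red(Kr(π))` is a non-crossing partition of `[n̄]`. -/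
def NCk (k n : ℕ) : Set (Finset (Finset (Fin ((k + 1) * n)))) :=
  {π | IsPartition π ∧ IsNonCrossing π ∧
       IsPartition (redPart π) ∧ IsNonCrossing (redPart π) ∧
       IsPartition (redPart (kr π)) ∧ IsNonCrossing (redPart (kr π))}

/-!
For a non-crossing partition `p` of `[m]`, the Kreweras complement is explicit: `ī` and `j̄`
share a block iff the points of `[m]` between them form a union of blocks of `p`. Such unions
are closed under symmetric difference, so this is an equivalence relation, and its classes are
the greatest partner of `p`. Conversely, if `u` and `v` lie in different blocks of `p`, the
block of `u` exhibits a Kreweras pair separating `u` from `v`; this gives `Kr(Kr(p)) = p - 1`,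
the rotation of `p` by one step. Rotation commutes with reduction mod `n`, so the reduction
property of `π` transfers to `Kr(π)`; `Kr` is injective on `NC^{(k)}(n)` because rotation is,
hence bijective as the set is finite. Coarsening `p` shrinks the relation, which reverses the
order.
-/
open Finset

section Blocks

variable {X Y : Type*}

def SameBlock (P : Finset (Finset X)) (x y : X) : Prop :=
  ∃ B ∈ P, x ∈ B ∧ y ∈ B

theorem SameBlock.symm {P : Finset (Finset X)} {x y : X} (h : SameBlock P x y) :
    SameBlock P y x :=
  let ⟨B, hB, hx, hy⟩ := h
  ⟨B, hB, hy, hx⟩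

theorem Refines.sameBlock {P Q : Finset (Finset X)} (h : Refines P Q) {x y : X}
    (hxy : SameBlock P x y) : SameBlock Q x y :=
  let ⟨B, hB, hx, hy⟩ := hxy
  let ⟨C, hC, hBC⟩ := h B hB
  ⟨C, hC, hBC hx, hBC hy⟩

namespace IsPartition

variable {P Q : Finset (Finset X)}

theorem eq_of_mem (hP : IsPartition P) {B B' : Finset X} (hB : B ∈ P) (hB' : B' ∈ P) {x : X}
    (hx : x ∈ B) (hx' : x ∈ B') : B = B' :=
  (hP.2 x).unique ⟨hB, hx⟩ ⟨hB', hx'⟩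

theorem sameBlock_refl (hP : IsPartition P) (x : X) : SameBlock P x x :=
  let ⟨B, ⟨hB, hx⟩, _⟩ := hP.2 x
  ⟨B, hB, hx, hx⟩

theorem mem_iff_sameBlock (hP : IsPartition P) {A : Finset X} (hA : A ∈ P) {a : X}
    (ha : a ∈ A) {x : X} : x ∈ A ↔ SameBlock P a x := by
  refine ⟨fun hx => ⟨A, hA, ha, hx⟩, ?_⟩
  rintro ⟨B, hB, haB, hxB⟩
  rwa [hP.eq_of_mem hA hB ha haB]

theorem sameBlock_trans (hP : IsPartition P) {x y z : X} (hxy : SameBlock P x y)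
    (hyz : SameBlock P y z) : SameBlock P x z :=
  let ⟨B, hB, hx, hy⟩ := hxy
  ⟨B, hB, hx, (hP.mem_iff_sameBlock hB hy).2 hyz⟩

theorem refines_of_sameBlock (hQ : IsPartition Q) (hP : ∀ B ∈ P, B.Nonempty)
    (h : ∀ x y, SameBlock P x y → SameBlock Q x y) : Refines P Q := by
  intro B hB
  obtain ⟨x, hx⟩ := hP B hB
  obtain ⟨C, ⟨hC, hxC⟩, -⟩ := hQ.2 x
  exact ⟨C, hC, fun y hy => (hQ.mem_iff_sameBlock hC hxC).2 (h x y ⟨B, hB, hx, hy⟩)⟩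

theorem ext_sameBlock (hP : IsPartition P) (hQ : IsPartition Q)
    (h : ∀ x y, SameBlock P x y ↔ SameBlock Q x y) : P = Q := by
  have hsub : ∀ {P Q : Finset (Finset X)}, IsPartition P → IsPartition Q →
      (∀ x y, SameBlock P x y ↔ SameBlock Q x y) → P ⊆ Q := by
    intro P Q hP hQ h B hB
    obtain ⟨x, hx⟩ := hP.1 B hB
    obtain ⟨C, ⟨hC, hxC⟩, -⟩ := hQ.2 x
    have hBC : B = C := by
      ext y
      rw [hP.mem_iff_sameBlock hB hx, hQ.mem_iff_sameBlock hC hxC, h]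
    exact hBC ▸ hC
  exact (hsub hP hQ h).antisymm (hsub hQ hP fun x y => (h x y).symm)

theorem eq_of_refines (hP : IsPartition P) (hQ : IsPartition Q) (hPQ : Refines P Q)
    (hQP : Refines Q P) : P = Q :=
  hP.ext_sameBlock hQ fun _ _ => ⟨hPQ.sameBlock, hQP.sameBlock⟩

end IsPartition

def Saturated (P : Finset (Finset X)) (S : Set X) : Prop :=
  ∀ ⦃x y⦄, SameBlock P x y → x ∈ S → y ∈ S

namespace Saturated

variable {P Q : Finset (Finset X)} {S T : Set X}

theorem compl (hS : Saturated P S) : Saturated P Sᶜ :=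
  fun _ _ hxy hx hy => hx (hS hxy.symm hy)

theorem inter (hS : Saturated P S) (hT : Saturated P T) : Saturated P (S ∩ T) :=
  fun _ _ hxy hx => ⟨hS hxy hx.1, hT hxy hx.2⟩

theorem union (hS : Saturated P S) (hT : Saturated P T) : Saturated P (S ∪ T) :=
  fun _ _ hxy hx => hx.imp (hS hxy) (hT hxy)

theorem sdiff (hS : Saturated P S) (hT : Saturated P T) : Saturated P (S \ T) :=
  hS.inter hT.compl

theorem symmDiff (hS : Saturated P S) (hT : Saturated P T) : Saturated P (symmDiff S T) :=
  (hS.sdiff hT).union (hT.sdiff hS)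

theorem of_refines (hPQ : Refines P Q) (hS : Saturated Q S) : Saturated P S :=
  fun _ _ hxy => hS (hPQ.sameBlock hxy)

end Saturated

section Classes

variable [Fintype X] {r : X → X → Prop}

noncomputable def blocksOf (r : X → X → Prop) : Finset (Finset X) :=
  univ.image fun x => univ.filter (r x)

theorem sameBlock_blocksOf (hr : Equivalence r) {x y : X} :
    SameBlock (blocksOf r) x y ↔ r x y := by
  simp only [SameBlock, blocksOf, mem_image, mem_univ, true_and, exists_exists_eq_and,
    mem_filter]
  exact ⟨fun ⟨z, hzx, hzy⟩ => hr.trans (hr.symm hzx) hzy, fun h => ⟨x, hr.refl x, h⟩⟩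

theorem isPartition_blocksOf (hr : Equivalence r) : IsPartition (blocksOf r) := by
  refine ⟨?_, fun x => ⟨univ.filter (r x), ⟨?_, ?_⟩, ?_⟩⟩
  · simp only [blocksOf, mem_image, mem_univ, true_and, forall_exists_index,
      forall_apply_eq_imp_iff]
    exact fun x => ⟨x, by simpa using hr.refl x⟩
  · exact mem_image_of_mem _ (mem_univ x)
  · simpa using hr.refl x
  · rintro C ⟨hC, hxC⟩
    obtain ⟨z, -, rfl⟩ := mem_image.1 hC
    ext y
    simp only [mem_filter, mem_univ, true_and] at hxC ⊢
    exact ⟨fun h => hr.trans (hr.symm hxC) h, fun h => hr.trans hxC h⟩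

end Classes

noncomputable def relabel (e : X ≃ Y) (P : Finset (Finset X)) : Finset (Finset Y) :=
  P.image (Finset.map e.toEmbedding)

theorem relabel_injective (e : X ≃ Y) : Function.Injective (relabel e) :=
  image_injective (map_injective e.toEmbedding)

theorem sameBlock_relabel (e : X ≃ Y) {P : Finset (Finset X)} {x y : Y} :
    SameBlock (relabel e P) x y ↔ SameBlock P (e.symm x) (e.symm y) := by
  simp [SameBlock, relabel]

theorem IsPartition.relabel {P : Finset (Finset X)} (hP : IsPartition P) (e : X ≃ Y) :
    IsPartition (relabel e P) := by
  refine ⟨?_, fun y => ?_⟩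
  · simp only [_root_.relabel, mem_image, forall_exists_index, and_imp]
    rintro _ B hB rfl
    exact (hP.1 B hB).map
  · obtain ⟨B, ⟨hB, hyB⟩, huniq⟩ := hP.2 (e.symm y)
    refine ⟨B.map e.toEmbedding, ⟨mem_image_of_mem _ hB, by simpa using hyB⟩, ?_⟩
    rintro _ ⟨hC', hyC⟩
    obtain ⟨C, hC, rfl⟩ := mem_image.1 hC'
    rw [huniq C ⟨hC, by simpa [← Equiv.eq_symm_apply] using hyC⟩]

end Blocks

section LinearOrder

variable {X : Type*} [LinearOrder X] {P : Finset (Finset X)}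

theorem isNonCrossing_iff_sameBlock : IsNonCrossing P ↔ ∀ ⦃a b c d : X⦄, a < b → b < c →
    c < d → SameBlock P a c → SameBlock P b d → SameBlock P a b :=
  Iff.rfl

theorem IsNonCrossing.sameBlock (hnc : IsNonCrossing P) {a b c d : X} (hab : a < b)
    (hbc : b < c) (hcd : c < d) (hac : SameBlock P a c) (hbd : SameBlock P b d) :
    SameBlock P a b :=
  hnc a b c d hab hbc hcd hac hbd

theorem IsNonCrossing.mem_Ioo_of_sameBlock (hnc : IsNonCrossing P) (hP : IsPartition P)
    {A : Finset X} (hA : A ∈ P) {a b x y : X} (ha : a ∈ A) (hb : b ∈ A) (hx : x ∈ Set.Ioo a b)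
    (hxA : x ∉ A) (hxy : SameBlock P x y) : y ∈ Set.Ioo a b := by
  have hab : SameBlock P a b := ⟨A, hA, ha, hb⟩
  have hxA' : ¬SameBlock P a x := fun h => hxA ((hP.mem_iff_sameBlock hA ha).2 h)
  refine ⟨lt_of_not_ge fun hya => ?_, lt_of_not_ge fun hby => ?_⟩
  · rcases hya.eq_or_lt with rfl | hya
    · exact hxA' hxy.symm
    · exact hxA' (hP.sameBlock_trans (hnc.sameBlock hya hx.1 hx.2 hxy.symm hab).symm hxy.symm)
  · rcases hby.eq_or_lt with rfl | hby
    · exact hxA' (hP.sameBlock_trans hab hxy.symm)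
    · exact hxA' (hnc.sameBlock hx.1 hx.2 hby hab hxy)

theorem IsNonCrossing.saturated_Ioo (hnc : IsNonCrossing P) (hP : IsPartition P)
    {A : Finset X} (hA : A ∈ P) {a b : X} (ha : a ∈ A) (hb : b ∈ A)
    (hgap : ∀ c ∈ A, c ∉ Set.Ioo a b) : Saturated P (Set.Ioo a b) :=
  fun x _ hxy hx => hnc.mem_Ioo_of_sameBlock hP hA ha hb hx (fun h => hgap x h hx) hxy

theorem IsNonCrossing.saturated_Icc (hnc : IsNonCrossing P) (hP : IsPartition P)
    {A : Finset X} (hA : A ∈ P) {a b : X} (ha : a ∈ A) (hb : b ∈ A)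
    (hbounds : ∀ c ∈ A, c ∈ Set.Icc a b) : Saturated P (Set.Icc a b) := by
  intro x y hxy hx
  by_cases hxA : x ∈ A
  · exact hbounds y ((hP.mem_iff_sameBlock hA hxA).2 hxy)
  · have hx' : x ∈ Set.Ioo a b :=
      ⟨hx.1.lt_of_ne (by rintro rfl; exact hxA ha), hx.2.lt_of_ne (by rintro rfl; exact hxA hb)⟩
    exact Set.Ioo_subset_Icc_self (hnc.mem_Ioo_of_sameBlock hP hA ha hb hx' hxA hxy)

/-- Barred `ī` and `j̄` lie in one block of the Kreweras complement iff the unbarred points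
between them form a union of blocks of `P`. -/
def KrRel (P : Finset (Finset X)) (i j : X) : Prop :=
  Saturated P (Set.uIoc i j)

theorem krRel_equivalence (P : Finset (Finset X)) : Equivalence (KrRel P) where
  refl i := by simp [KrRel, Saturated, Set.uIoc]
  symm h := by rwa [KrRel, Set.uIoc_comm]
  trans {i j k} hij hjk := by
    have hI : Set.uIoc i k = symmDiff (Set.uIoc i j) (Set.uIoc j k) := by
      ext x
      simp only [Set.mem_symmDiff, Set.mem_uIoc]
      grind
    rw [KrRel, hI]
    exact hij.symmDiff hjk

theorem KrRel.of_refines {P Q : Finset (Finset X)} (hPQ : Refines P Q) {i j : X}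
    (h : KrRel Q i j) : KrRel P i j :=
  Saturated.of_refines hPQ h

theorem krRel_of_lt {i j : X} (hij : i < j) : KrRel P i j ↔ Saturated P (Set.Ioc i j) := by
  rw [KrRel, Set.uIoc_of_le hij.le]

variable [Fintype X]

noncomputable def kreweras (P : Finset (Finset X)) : Finset (Finset X) :=
  blocksOf (KrRel P)

theorem sameBlock_kreweras {i j : X} : SameBlock (kreweras P) i j ↔ KrRel P i j :=
  sameBlock_blocksOf (krRel_equivalence P)

theorem isPartition_kreweras (P : Finset (Finset X)) : IsPartition (kreweras P) :=
  isPartition_blocksOf (krRel_equivalence P)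

theorem isNonCrossing_kreweras (P : Finset (Finset X)) : IsNonCrossing (kreweras P) := by
  refine isNonCrossing_iff_sameBlock.2 fun a b c d hab hbc hcd hac hbd => ?_
  rw [sameBlock_kreweras, krRel_of_lt (hab.trans hbc)] at hac
  rw [sameBlock_kreweras, krRel_of_lt (hbc.trans hcd)] at hbd
  rw [sameBlock_kreweras, krRel_of_lt hab]
  have hI : Set.Ioc a b = Set.Ioc a c \ Set.Ioc b d := by
    ext x
    simp only [Set.mem_sdiff, Set.mem_Ioc]
    grind
  rw [hI]
  exact hac.sdiff hbd

theorem kreweras_refines_kreweras {P Q : Finset (Finset X)} (hPQ : Refines P Q) :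
    Refines (kreweras Q) (kreweras P) :=
  (isPartition_kreweras P).refines_of_sameBlock (isPartition_kreweras Q).1 fun _ _ h =>
    sameBlock_kreweras.2 ((sameBlock_kreweras.1 h).of_refines hPQ)

end LinearOrder

section Interleaved

variable {m : ℕ}

theorem Interl.exists_eq_toLex (x : Interl m) : ∃ i s, x = toLex (i, s) :=
  ⟨(ofLex x).1, (ofLex x).2, rfl⟩

@[simp]
theorem Interl.toLex_lt_toLex {i j : Fin m} {s t : Bool} :
    toLex (i, s) < toLex (j, t) ↔ i < j ∨ i = j ∧ s = false ∧ t = true := by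
  rw [Prod.Lex.toLex_lt_toLex]
  cases s <;> cases t <;> simp

@[simp]
theorem toLex_mem_unbar {B : Finset (Fin m)} {i : Fin m} {s : Bool} :
    toLex (i, s) ∈ unbar B ↔ s = false ∧ i ∈ B := by
  simp [unbar, and_comm, eq_comm]

@[simp]
theorem toLex_mem_barred {B : Finset (Fin m)} {i : Fin m} {s : Bool} :
    toLex (i, s) ∈ barred B ↔ s = true ∧ i ∈ B := by
  simp [barred, and_comm, eq_comm]

theorem sameBlock_unionPart {p q : Finset (Finset (Fin m))} {i j : Fin m} {s t : Bool} :
    SameBlock (unionPart p q) (toLex (i, s)) (toLex (j, t)) ↔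
      s = false ∧ t = false ∧ SameBlock p i j ∨ s = true ∧ t = true ∧ SameBlock q i j := by
  simp only [SameBlock, unionPart, mem_union, mem_image, exists_exists_and_eq_and, or_and_right,
    exists_or, toLex_mem_unbar, toLex_mem_barred]
  cases s <;> cases t <;> simp

theorem isNonCrossing_unionPart_kreweras {p : Finset (Finset (Fin m))}
    (hnc : IsNonCrossing p) : IsNonCrossing (unionPart p (kreweras p)) := by
  refine isNonCrossing_iff_sameBlock.2 fun a b c d hab hbc hcd hac hbd => ?_
  obtain ⟨ia, sa, rfl⟩ := a.exists_eq_toLex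
  obtain ⟨ib, sb, rfl⟩ := b.exists_eq_toLex
  obtain ⟨ic, sc, rfl⟩ := c.exists_eq_toLex
  obtain ⟨id, sd, rfl⟩ := d.exists_eq_toLex
  rw [sameBlock_unionPart] at hac hbd ⊢
  rcases hac with ⟨rfl, rfl, hac⟩ | ⟨rfl, rfl, hac⟩ <;>
    rcases hbd with ⟨rfl, rfl, hbd⟩ | ⟨rfl, rfl, hbd⟩ <;>
    simp only [Interl.toLex_lt_toLex, and_false, or_false, Bool.false_eq_true,
      Bool.true_eq_false, and_true, ← le_iff_lt_or_eq] at hab hbc hcd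
  · exact Or.inl ⟨rfl, rfl, hnc.sameBlock hab hbc hcd hac hbd⟩
  · -- `ia ≤ ib < ic ≤ id`: the unbarred pair would have to leave the interval `(ib, id]`.
    have hsat := (krRel_of_lt (hbc.trans_le hcd)).1 (sameBlock_kreweras.1 hbd)
    have := hsat hac.symm ⟨hbc, hcd⟩
    exact absurd this.1 (not_lt.2 hab)
  · have hsat := (krRel_of_lt (hab.trans_le hbc)).1 (sameBlock_kreweras.1 hac)
    have := hsat hbd ⟨hab, hbc⟩
    exact absurd this.2 (not_le.2 hcd)
  · exact Or.inr ⟨rfl, rfl, isNonCrossing_kreweras p |>.sameBlock hab hbc hcd hac hbd⟩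

theorem refines_kreweras {p q : Finset (Finset (Fin m))} (hq : IsPartition q)
    (hpq : IsNonCrossing (unionPart p q)) : Refines q (kreweras p) := by
  have key : ∀ u v, u < v → SameBlock q u v → KrRel p u v := by
    intro u v huv hquv
    rw [krRel_of_lt huv]
    intro x y hxy hx
    by_contra hy
    -- an unbarred pair `x, y` leaving `(u, v]` would cross the barred pair `ū, v̄`
    rcases not_and_or.1 hy with hyu | hvy
    · have := hpq.sameBlock (a := toLex (y, false)) (b := toLex (u, true))
        (c := toLex (x, false)) (d := toLex (v, true))
        (by simpa [← le_iff_lt_or_eq] using le_of_not_gt hyu)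
        (by simpa using hx.1) (by simpa [← le_iff_lt_or_eq] using hx.2)
        (sameBlock_unionPart.2 (Or.inl ⟨rfl, rfl, hxy.symm⟩))
        (sameBlock_unionPart.2 (Or.inr ⟨rfl, rfl, hquv⟩))
      simp [sameBlock_unionPart] at this
    · have := hpq.sameBlock (a := toLex (u, true)) (b := toLex (x, false))
        (c := toLex (v, true)) (d := toLex (y, false)) (by simpa using hx.1)
        (by simpa [← le_iff_lt_or_eq] using hx.2) (by simpa using lt_of_not_ge hvy)
        (sameBlock_unionPart.2 (Or.inr ⟨rfl, rfl, hquv⟩))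
        (sameBlock_unionPart.2 (Or.inl ⟨rfl, rfl, hxy⟩))
      simp [sameBlock_unionPart] at this
  refine (isPartition_kreweras p).refines_of_sameBlock hq.1 fun u v huv => ?_
  rw [sameBlock_kreweras]
  rcases lt_trichotomy u v with h | rfl | h
  · exact key u v h huv
  · exact (krRel_equivalence p).refl u
  · exact (krRel_equivalence p).symm (key v u h huv.symm)

theorem isKr_kreweras {p : Finset (Finset (Fin m))} (hnc : IsNonCrossing p) :
    IsKr p (kreweras p) :=
  ⟨isPartition_kreweras p, isNonCrossing_unionPart_kreweras hnc, fun _ hq hpq =>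
    refines_kreweras hq hpq⟩

theorem IsKr.unique {p q q' : Finset (Finset (Fin m))} (hq : IsKr p q) (hq' : IsKr p q') :
    q = q' :=
  hq.1.eq_of_refines hq'.1 (hq'.2.2 q hq.1 hq.2.1) (hq.2.2 q' hq'.1 hq'.2.1)

theorem kr_eq_kreweras {p : Finset (Finset (Fin m))} (hnc : IsNonCrossing p) :
    kr p = kreweras p := by
  have hex : ∃ q, IsKr p q := ⟨_, isKr_kreweras hnc⟩
  rw [kr, dif_pos hex]
  exact hex.choose_spec.unique (isKr_kreweras hnc)

end Interleaved

section Cyclic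

variable {m : ℕ} [NeZero m]

theorem Fin.val_add_one_eq_ite (x : Fin m) :
    ((x + 1 : Fin m) : ℕ) = if (x : ℕ) + 1 = m then (0 : ℕ) else (x : ℕ) + 1 := by
  rw [Fin.val_add, Fin.val_one']
  have := x.isLt
  split_ifs with h
  · rcases Nat.lt_or_ge 1 m with hm | hm
    · rw [Nat.mod_eq_of_lt hm, h, Nat.mod_self]
    · obtain rfl : m = 1 := by omega
      simp
  · rw [Nat.mod_eq_of_lt (by omega : 1 < m), Nat.mod_eq_of_lt (by omega)]

theorem Fin.val_sub_one_eq_ite (x : Fin m) :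
    ((x - 1 : Fin m) : ℕ) = if (x : ℕ) = 0 then m - 1 else (x : ℕ) - 1 := by
  split_ifs with h
  · obtain ⟨N, rfl⟩ := Nat.exists_eq_succ_of_ne_zero (NeZero.ne m)
    rw [Fin.coe_sub_one, if_pos (Fin.ext h)]
    rfl
  · exact Fin.val_sub_one_of_ne_zero (fun h' => h (by simp [h']))

noncomputable def rotate (p : Finset (Finset (Fin m))) : Finset (Finset (Fin m)) :=
  relabel (Equiv.subRight 1) p

theorem rotate_injective : Function.Injective (rotate (m := m)) :=
  relabel_injective _

theorem sameBlock_rotate {p : Finset (Finset (Fin m))} {x y : Fin m} :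
    SameBlock (rotate p) x y ↔ SameBlock p (x + 1) (y + 1) := by
  simp [rotate, sameBlock_relabel]

theorem krRel_sub_one_of_saturated_Icc {p : Finset (Finset (Fin m))} {a z : Fin m} (haz : a ≤ z)
    (h : Saturated p (Set.Icc a z)) : KrRel p z (a - 1) := by
  by_cases ha : a = 0
  · subst ha
    have hI : Set.uIoc z (0 - 1) = (Set.Icc 0 z)ᶜ := by
      ext x
      simp only [Set.mem_uIoc, Set.mem_compl_iff, Set.mem_Icc, Fin.lt_def,
        Fin.le_def, Fin.val_sub_one_eq_ite, Fin.val_zero]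
      have := x.isLt
      split_ifs <;> omega
    rw [KrRel, hI]
    exact h.compl
  · have hI : Set.uIoc z (a - 1) = Set.Icc a z := by
      ext x
      have ha' : (a : ℕ) ≠ 0 := fun h => ha (Fin.ext h)
      simp only [Set.mem_uIoc, Set.mem_Icc, Fin.lt_def, Fin.le_def, Fin.val_sub_one_eq_ite,
        if_neg ha'] at haz ⊢
      omega
    rwa [KrRel, hI]

theorem IsNonCrossing.krRel_sub_one_of_gap {p : Finset (Finset (Fin m))} (hnc : IsNonCrossing p)
    (hp : IsPartition p) {A : Finset (Fin m)} (hA : A ∈ p) {z a : Fin m} (hz : z ∈ A)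
    (ha : a ∈ A) (hza : z < a) (hgap : ∀ c ∈ A, c ∉ Set.Ioo z a) : KrRel p z (a - 1) := by
  have ha0 : (a : ℕ) ≠ 0 := by have := Fin.lt_def.1 hza; omega
  have hI : Set.uIoc z (a - 1) = Set.Ioo z a := by
    ext x
    simp only [Set.mem_uIoc, Set.mem_Ioo, Fin.lt_def, Fin.le_def, Fin.val_sub_one_eq_ite,
      if_neg ha0]
    have := Fin.lt_def.1 hza
    omega
  rw [KrRel, hI]
  exact hnc.saturated_Ioo hp hA hz ha hgap

/-- The separation argument: if `u` and `v` lie in different blocks, the last point `z < v` of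
the block of `u` is Kreweras-related to a point outside `[u, v)`, namely the point just before
the next element of that block, or, if there is none, the point just before its first element. -/
theorem sameBlock_of_saturated_Ico {p : Finset (Finset (Fin m))} (hp : IsPartition p)
    (hnc : IsNonCrossing p) {u v : Fin m} (huv : u < v)
    (hsat : Saturated (kreweras p) (Set.Ico u v)) : SameBlock p u v := by
  by_contra hne
  obtain ⟨A, ⟨hA, huA⟩, -⟩ := hp.2 u
  have hvA : v ∉ A := fun h => hne ⟨A, hA, huA, h⟩
  have huS : u ∈ A.filter (· < v) := mem_filter.2 ⟨huA, huv⟩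
  set z := (A.filter (· < v)).max' ⟨u, huS⟩
  obtain ⟨hzA, hzv⟩ := mem_filter.1 ((A.filter (· < v)).max'_mem ⟨u, huS⟩)
  have huz : u ≤ z := (A.filter (· < v)).le_max' u huS
  have hzmax : ∀ c ∈ A, c < v → c ≤ z := fun c hc hcv =>
    (A.filter (· < v)).le_max' c (mem_filter.2 ⟨hc, hcv⟩)
  have hout : ∀ w, KrRel p z w → w ∈ Set.Ico u v := fun w hzw =>
    hsat (sameBlock_kreweras.2 hzw) ⟨huz, hzv⟩
  by_cases hup : ∃ c ∈ A, v < c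
  · obtain ⟨c, hcA, hvc⟩ := hup
    have hcT : c ∈ A.filter (v < ·) := mem_filter.2 ⟨hcA, hvc⟩
    set a := (A.filter (v < ·)).min' ⟨c, hcT⟩
    obtain ⟨haA, hva⟩ := mem_filter.1 ((A.filter (v < ·)).min'_mem ⟨c, hcT⟩)
    have hgap : ∀ c ∈ A, c ∉ Set.Ioo z a := by
      rintro c hc ⟨hzc, hca⟩
      rcases lt_trichotomy c v with hcv | rfl | hvc
      · exact (hzmax c hc hcv).not_gt hzc
      · exact hvA hc
      · exact ((A.filter (v < ·)).min'_le c (mem_filter.2 ⟨hc, hvc⟩)).not_gt hca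
    have ha0 : (a : ℕ) ≠ 0 := by have := Fin.lt_def.1 hva; omega
    have := hout (a - 1) (hnc.krRel_sub_one_of_gap hp hA hzA haA (hzv.trans hva) hgap)
    simp only [Set.mem_Ico, Fin.lt_def, Fin.le_def, Fin.val_sub_one_eq_ite, if_neg ha0] at this
    have := Fin.lt_def.1 hva
    omega
  · simp only [not_exists, not_and, not_lt] at hup
    set a := A.min' ⟨u, huA⟩
    have hbounds : ∀ c ∈ A, c ∈ Set.Icc a z := fun c hc =>
      ⟨A.min'_le c hc, hzmax c hc ((hup c hc).lt_of_ne fun h => hvA (h ▸ hc))⟩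
    have hau : a ≤ u := A.min'_le u huA
    have hmem := hout (a - 1) (krRel_sub_one_of_saturated_Icc (hau.trans huz)
      (hnc.saturated_Icc hp hA (A.min'_mem _) hzA hbounds))
    simp only [Set.mem_Ico, Fin.lt_def, Fin.le_def, Fin.val_sub_one_eq_ite] at hmem hau
    have := v.isLt
    split_ifs at hmem <;> omega

theorem saturated_Ioc_of_sameBlock_add_one {p : Finset (Finset (Fin m))} {x y : Fin m}
    (hxy : x < y) (h : SameBlock p (x + 1) (y + 1)) : Saturated (kreweras p) (Set.Ioc x y) := by
  intro z w hzw hz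
  rw [sameBlock_kreweras] at hzw
  have hx1 : ((x + 1 : Fin m) : ℕ) = x + 1 := Fin.val_add_one_of_lt' (by omega)
  simp only [Set.mem_Ioc, Fin.lt_def, Fin.le_def] at hz hxy ⊢
  by_contra hw
  rcases Nat.lt_or_ge (w : ℕ) z with hwz | hzw'
  · have hsat := (krRel_of_lt (Fin.lt_def.2 hwz)).1 ((krRel_equivalence p).symm hzw)
    have hy1 := hsat h (by simp only [Set.mem_Ioc, Fin.lt_def, Fin.le_def]; omega)
    simp only [Set.mem_Ioc, Fin.lt_def, Fin.le_def, Fin.val_add_one_eq_ite] at hy1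
    split_ifs at hy1 <;> omega
  · have hzw'' : z < w := Fin.lt_def.2 (by omega)
    have hsat := (krRel_of_lt hzw'').1 hzw
    have hy1 : ((y + 1 : Fin m) : ℕ) = y + 1 := Fin.val_add_one_of_lt' (by omega)
    have hx := hsat h.symm (by simp only [Set.mem_Ioc, Fin.lt_def, Fin.le_def]; omega)
    simp only [Set.mem_Ioc, Fin.lt_def, Fin.le_def] at hx
    omega

theorem krRel_kreweras_iff {p : Finset (Finset (Fin m))} (hp : IsPartition p)
    (hnc : IsNonCrossing p) {x y : Fin m} :
    KrRel (kreweras p) x y ↔ SameBlock p (x + 1) (y + 1) := by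
  have key : ∀ {x y : Fin m}, x < y → (KrRel (kreweras p) x y ↔ SameBlock p (x + 1) (y + 1)) := by
    intro x y hxy
    rw [krRel_of_lt hxy]
    refine ⟨fun hsat => ?_, saturated_Ioc_of_sameBlock_add_one hxy⟩
    have hx1 : ((x + 1 : Fin m) : ℕ) = x + 1 := Fin.val_add_one_of_lt' (by omega)
    have hy := y.isLt
    by_cases hwrap : (y : ℕ) + 1 = m
    · -- `y + 1 = 0`: pass to the complement `[0, x + 1)` of `(x, y]`.
      have hy0 : y + 1 = 0 := Fin.ext (by rw [Fin.val_add_one_eq_ite, if_pos hwrap]; rfl)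
      have hI : (Set.Ioc x y)ᶜ = Set.Ico 0 (x + 1) := by
        ext w
        simp only [Set.mem_compl_iff, Set.mem_Ioc, Set.mem_Ico, Fin.lt_def, Fin.le_def, hx1,
          Fin.val_zero]
        omega
      rw [hy0]
      exact (sameBlock_of_saturated_Ico hp hnc (Fin.lt_def.2 (by simp [hx1]))
        (hI ▸ hsat.compl)).symm
    · have hy1 : ((y + 1 : Fin m) : ℕ) = y + 1 := Fin.val_add_one_of_lt' (by omega)
      have hI : Set.Ioc x y = Set.Ico (x + 1) (y + 1) := by
        ext w
        simp only [Set.mem_Ioc, Set.mem_Ico, Fin.lt_def, Fin.le_def, hx1, hy1]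
        omega
      exact sameBlock_of_saturated_Ico hp hnc (Fin.lt_def.2 (by simp only [hx1, hy1]; omega))
        (hI ▸ hsat)
  rcases lt_trichotomy x y with h | rfl | h
  · exact key h
  · exact iff_of_true ((krRel_equivalence _).refl x) (hp.sameBlock_refl _)
  · exact ⟨fun hxy => (key h |>.1 ((krRel_equivalence _).symm hxy)).symm,
      fun hxy => (krRel_equivalence _).symm (key h |>.2 hxy.symm)⟩

theorem kreweras_kreweras {p : Finset (Finset (Fin m))} (hp : IsPartition p)
    (hnc : IsNonCrossing p) : kreweras (kreweras p) = rotate p :=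
  (isPartition_kreweras _).ext_sameBlock (hp.relabel _) fun _ _ => by
    rw [sameBlock_kreweras, krRel_kreweras_iff hp hnc, sameBlock_rotate]

theorem kr_kr {p : Finset (Finset (Fin m))} (hp : IsPartition p) (hnc : IsNonCrossing p) :
    kr (kr p) = rotate p := by
  rw [kr_eq_kreweras hnc, kr_eq_kreweras (isNonCrossing_kreweras p), kreweras_kreweras hp hnc]

theorem IsNonCrossing.rotate {p : Finset (Finset (Fin m))} (hnc : IsNonCrossing p)
    (hp : IsPartition p) : IsNonCrossing (rotate p) :=
  kreweras_kreweras hp hnc ▸ isNonCrossing_kreweras _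

end Cyclic

section Reduction

variable {k n : ℕ} [NeZero n]

theorem red_add_one (x : Fin ((k + 1) * n)) : red (x + 1) = red x + 1 := by
  have hdvd : n ∣ (k + 1) * n := dvd_mul_left n (k + 1)
  apply Fin.ext
  simp only [red, Fin.val_add, Fin.val_one', Nat.mod_mod_of_dvd _ hdvd]
  rw [Nat.add_mod, Nat.mod_mod_of_dvd _ hdvd, ← Nat.add_mod]

theorem redPart_rotate (π : Finset (Finset (Fin ((k + 1) * n)))) :
    redPart (rotate π) = rotate (redPart π) := by
  have hsub : ∀ x : Fin ((k + 1) * n), red (x - 1) = red x - 1 := fun x => by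
    rw [eq_sub_iff_add_eq, ← red_add_one, sub_add_cancel]
  ext C
  simp [redPart, rotate, relabel, map_eq_image, image_image, Function.comp_def, hsub]

theorem kr_mem_NCk {π : Finset (Finset (Fin ((k + 1) * n)))} (hπ : π ∈ NCk k n) :
    kr π ∈ NCk k n := by
  obtain ⟨hp, hnc, hrp, hrnc, hrkp, hrknc⟩ := hπ
  have hrkk : redPart (kr (kr π)) = rotate (redPart π) := by rw [kr_kr hp hnc, redPart_rotate]
  refine ⟨kr_eq_kreweras hnc ▸ isPartition_kreweras π, kr_eq_kreweras hnc ▸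
    isNonCrossing_kreweras π, hrkp, hrknc, hrkk ▸ hrp.relabel _, hrkk ▸ hrnc.rotate hrp⟩

end Reduction

/-- **Statement 9.** (Identifying partitions of the barred copy with partitions of
`[(k+1)n]` by relabeling, as built into `kr`.) The Kreweras complement of a non-crossing
partition of type `k` is again of type `k`; the map `π ↦ Kr(π)` is a bijection of
`NC^{(k)}(n)` onto itself, and it reverses the reverse-refinement order. -/
theorem stmt9 (k n : ℕ) (hn : 1 ≤ n) :
    (∀ π ∈ NCk k n, kr π ∈ NCk k n) ∧
    Set.BijOn (kr (m := (k + 1) * n)) (NCk k n) (NCk k n) ∧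
    (∀ π ∈ NCk k n, ∀ ρ ∈ NCk k n, Refines π ρ → Refines (kr ρ) (kr π)) := by
  have : NeZero n := ⟨by omega⟩
  have hmaps : Set.MapsTo kr (NCk k n) (NCk k n) := fun _ => kr_mem_NCk
  have hinj : Set.InjOn kr (NCk k n) := fun π hπ ρ hρ h =>
    rotate_injective (by rw [← kr_kr hπ.1 hπ.2.1, ← kr_kr hρ.1 hρ.2.1, h])
  refine ⟨hmaps, ((Set.toFinite _).injOn_iff_bijOn_of_mapsTo hmaps).1 hinj,
    fun π hπ ρ hρ h => ?_⟩
  rw [kr_eq_kreweras hπ.2.1, kr_eq_kreweras hρ.2.1]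
  exact kreweras_refines_kreweras h
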